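/- arXiv:2304.09331 — 5 statements merged into one kernel-verified Lean document; each statement's English description precedes it below -/
import Mathlib

section
/- Consider a uniformly random permutation S of {1, 2, ..., N} arranged in a cycle (so S_1 and S_N are adjacent). Let M be the number of indices i such that S_i is smaller than both its cyclic neighbors. Then Pr[M ≤ (N-3)/18] ≤ 24/(N-3). -/
open scoped Classical

/-- `i` is a cyclic local minimum of the permutation `S` of `{1,...,N}`
(represented as a bijection from cyclic positions `ZMod N` to values `Fin N`):
`S i` is smaller than both of its cyclic neighbours. -/
def isCycLocalMin {N : ℕ} [NeZero N] (S : ZMod N ≃ Fin N) (i : ZMod N) : Prop :=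
  S i < S (i - 1) ∧ S i < S (i + 1)

/-- The number of cyclic local minima of the permutation `S`. -/
noncomputable def localMinCount (N : ℕ) [NeZero N] (S : ZMod N ≃ Fin N) : ℕ :=
  (Finset.univ.filter fun i : ZMod N => isCycLocalMin S i).card

/-!
Chebyshev's inequality for the number `M` of local minima. Position `i` is a local minimum iff it
is the minimiser of `S` on its neighbourhood `{i - 1, i, i + 1}`. Swapping two positions of a set
`s` shows that every point of `s` is equally likely to be the minimiser on `s`, also after
conditioning on an event that only depends on the values outside `s`. Hence `i` is a local
minimum with probability `1/3`, so `E M = N / 3`, and if the neighbourhoods of `i` and `j` are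
disjoint, both are local minima with probability `1/9`. Bounding the at most five other pairs for
each `i` by `1/3` gives `E M² ≤ N (N + 10) / 9`, so `Var M ≤ 10 N / 9`, and Chebyshev at distance
`N / 3 - (N - 3) / 18 = (5 N + 3) / 18` gives `360 N / (5 N + 3)² ≤ 24 / (N - 3)`.
-/

open Finset

section MinPosition

variable {α β : Type*} [LinearOrder β]

theorem card_filter_isMinOn_eq_one (S : α ≃ β) {s : Finset α} (hs : s.Nonempty) :
    #{x ∈ s | IsMinOn S s x} = 1 := by
  obtain ⟨a, has, hmin⟩ := s.exists_min_image S hs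
  refine card_eq_one.2 ⟨a, ext fun y => ?_⟩
  simp only [mem_filter, mem_singleton, isMinOn_iff]
  constructor
  · rintro ⟨hy, hymin⟩
    exact S.injective ((hymin a has).antisymm (hmin y hy))
  · rintro rfl
    exact ⟨has, hmin⟩

variable [DecidableEq α]

theorem swap_apply_mem {s : Finset α} {x y z : α} (hx : x ∈ s) (hy : y ∈ s) (hz : z ∈ s) :
    Equiv.swap x y z ∈ s := by
  rw [Equiv.swap_apply_def]; split_ifs <;> assumption

variable [Fintype α] [Fintype β]

theorem card_filter_isMinOn_swap {s : Finset α} {x y : α} (hx : x ∈ s) (hy : y ∈ s)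
    (Q : (α ≃ β) → Prop) (hQ : ∀ S S' : α ≃ β, (∀ z ∉ s, S z = S' z) → (Q S ↔ Q S')) :
    #{S | Q S ∧ IsMinOn S s x} = #{S | Q S ∧ IsMinOn S s y} := by
  refine card_equiv (Equiv.equivCongr (Equiv.swap x y) (Equiv.refl β)) fun S => ?_
  have hS : ∀ z, Equiv.equivCongr (Equiv.swap x y) (Equiv.refl β) S z = S (Equiv.swap x y z) :=
    fun z => by simp [Equiv.equivCongr]
  have hQS : Q S ↔ Q (Equiv.equivCongr (Equiv.swap x y) (Equiv.refl β) S) := by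
    refine hQ _ _ fun z hz => ?_
    rw [hS, Equiv.swap_apply_of_ne_of_ne (ne_of_mem_of_not_mem hx hz).symm
      (ne_of_mem_of_not_mem hy hz).symm]
  simp only [mem_filter, mem_univ, true_and, isMinOn_iff, hS, Equiv.swap_apply_right, ← hQS]
  refine and_congr_right fun _ => ⟨fun h z hz => ?_, fun h z hz => ?_⟩
  · simpa using h _ (swap_apply_mem hx hy hz)
  · simpa using h _ (swap_apply_mem hx hy hz)

theorem card_mul_card_filter_isMinOn {s : Finset α} {x : α} (hx : x ∈ s)
    (Q : (α ≃ β) → Prop) (hQ : ∀ S S' : α ≃ β, (∀ z ∉ s, S z = S' z) → (Q S ↔ Q S')) :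
    #s * #{S | Q S ∧ IsMinOn S s x} = #{S | Q S} := by
  calc #s * #{S | Q S ∧ IsMinOn S s x} = ∑ y ∈ s, #{S | Q S ∧ IsMinOn S s y} := by
        rw [sum_congr rfl fun y hy => card_filter_isMinOn_swap hy hx Q hQ, sum_const, smul_eq_mul]
    _ = ∑ S ∈ univ.filter Q, #{y ∈ s | IsMinOn S s y} := by
        simpa only [bipartiteAbove, bipartiteBelow, filter_filter] using
          sum_card_bipartiteAbove_eq_sum_card_bipartiteBelow (fun y (S : α ≃ β) => IsMinOn S s y)
            (s := s) (t := univ.filter Q)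
    _ = #{S | Q S} := by simp [card_filter_isMinOn_eq_one _ ⟨x, hx⟩]

end MinPosition

theorem sum_card_filter_comm {ι κ : Type*} [Fintype ι] [Fintype κ] (P : κ → ι → Prop) :
    ∑ S, #{i | P S i} = ∑ i, #{S | P S i} := by
  simp only [card_filter]
  exact sum_comm

theorem sum_card_filter_sq {ι κ : Type*} [Fintype ι] [Fintype κ] (P : κ → ι → Prop) :
    ∑ S, #{i | P S i} ^ 2 = ∑ i, ∑ j, #{S | P S i ∧ P S j} := by
  simp only [sq, card_filter, sum_mul_sum, ite_zero_mul_ite_zero, mul_one]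
  rw [sum_comm]
  exact sum_congr rfl fun i _ => sum_comm

theorem card_filter_le_mul_sq_le {ι : Type*} (t : Finset ι) (f : ι → ℝ) {c m : ℝ} (hcm : c ≤ m) :
    #{x ∈ t | f x ≤ c} * (m - c) ^ 2 ≤ ∑ x ∈ t, (m - f x) ^ 2 := by
  calc #{x ∈ t | f x ≤ c} * (m - c) ^ 2 ≤ ∑ x ∈ t with f x ≤ c, (m - f x) ^ 2 := by
        rw [← nsmul_eq_mul]
        refine card_nsmul_le_sum _ _ _ fun x hx => ?_
        exact pow_le_pow_left₀ (sub_nonneg.2 hcm) (by linarith [(mem_filter.1 hx).2]) 2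
    _ ≤ ∑ x ∈ t, (m - f x) ^ 2 :=
        sum_le_sum_of_subset_of_nonneg (filter_subset _ _) fun _ _ _ => sq_nonneg _

namespace ZMod

variable {N : ℕ}

theorem natCast_ne_zero_of_lt {k : ℕ} (hk : 0 < k) (hkN : k < N) : (k : ZMod N) ≠ 0 := by
  rw [Ne, natCast_eq_zero_iff]
  exact fun h => absurd (Nat.le_of_dvd hk h) (by omega)

def cycNbhd (i : ZMod N) : Finset (ZMod N) := {i - 1, i, i + 1}

theorem mem_cycNbhd_self (i : ZMod N) : i ∈ cycNbhd i := by simp [cycNbhd]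

theorem card_cycNbhd (hN : 3 ≤ N) (i : ZMod N) : #(cycNbhd i) = 3 := by
  have h1 : (1 : ZMod N) ≠ 0 := by
    exact_mod_cast natCast_ne_zero_of_lt (k := 1) one_pos (by omega)
  have h2 : (2 : ZMod N) ≠ 0 := by
    exact_mod_cast natCast_ne_zero_of_lt (k := 2) two_pos (by omega)
  rw [cycNbhd, card_insert_of_notMem, card_pair]
  · intro h; apply h1; linear_combination -h
  · simp only [mem_insert, mem_singleton, not_or]
    constructor
    · intro h; apply h1; linear_combination -h
    · intro h; apply h2; linear_combination -h

theorem card_filter_not_disjoint_cycNbhd_le [NeZero N] (i : ZMod N) :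
    #{j | ¬Disjoint (cycNbhd i) (cycNbhd j)} ≤ 5 := by
  refine (card_le_card fun j hj => ?_).trans (card_le_five (a := i - 2) (b := i - 1) (c := i)
    (d := i + 1) (e := i + 2))
  obtain ⟨y, hyi, hyj⟩ := not_disjoint_iff.1 (mem_filter.1 hj).2
  simp only [cycNbhd, mem_insert, mem_singleton] at hyi hyj ⊢
  rcases hyi with rfl | rfl | rfl <;> rcases hyj with h | h | h <;> grind

end ZMod

section LocalMin

variable {N : ℕ} [NeZero N]

theorem isCycLocalMin_iff_isMinOn (hN : 2 ≤ N) (S : ZMod N ≃ Fin N) (i : ZMod N) :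
    isCycLocalMin S i ↔ IsMinOn S i.cycNbhd i := by
  have h1 : (1 : ZMod N) ≠ 0 := by
    exact_mod_cast ZMod.natCast_ne_zero_of_lt (k := 1) one_pos (by omega)
  simp only [isCycLocalMin, isMinOn_iff, ZMod.cycNbhd, coe_insert, coe_singleton,
    Set.mem_insert_iff, Set.mem_singleton_iff, forall_eq_or_imp, forall_eq, le_refl, true_and]
  have hl : i ≠ i - 1 := fun h => h1 (by linear_combination h)
  have hr : i ≠ i + 1 := fun h => h1 (by linear_combination -h)
  rw [le_iff_lt_or_eq, le_iff_lt_or_eq, S.injective.eq_iff, S.injective.eq_iff, or_iff_left hl,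
    or_iff_left hr]

theorem card_filter_isCycLocalMin (hN : 3 ≤ N) (i : ZMod N) :
    3 * #{S | isCycLocalMin S i} = Fintype.card (ZMod N ≃ Fin N) := by
  have h := card_mul_card_filter_isMinOn (ZMod.mem_cycNbhd_self i)
    (fun _ : ZMod N ≃ Fin N => True) fun _ _ _ => Iff.rfl
  simpa [ZMod.card_cycNbhd hN, isCycLocalMin_iff_isMinOn (by omega : 2 ≤ N)] using h

theorem isCycLocalMin_congr {S S' : ZMod N ≃ Fin N} {i : ZMod N}
    (h : ∀ z ∈ i.cycNbhd, S z = S' z) : isCycLocalMin S i ↔ isCycLocalMin S' i := by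
  simp only [ZMod.cycNbhd, mem_insert, mem_singleton, forall_eq_or_imp, forall_eq] at h
  rw [isCycLocalMin, isCycLocalMin, h.1, h.2.1, h.2.2]

theorem card_filter_isCycLocalMin_and_of_disjoint (hN : 3 ≤ N) {i j : ZMod N}
    (hij : Disjoint i.cycNbhd j.cycNbhd) :
    9 * #{S | isCycLocalMin S i ∧ isCycLocalMin S j} = Fintype.card (ZMod N ≃ Fin N) := by
  have h := card_mul_card_filter_isMinOn (ZMod.mem_cycNbhd_self j) (fun S => isCycLocalMin S i)
    fun S S' hSS' => isCycLocalMin_congr fun z hz => hSS' z (disjoint_left.1 hij hz)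
  simp only [← isCycLocalMin_iff_isMinOn (by omega : 2 ≤ N), ZMod.card_cycNbhd hN] at h
  rw [← card_filter_isCycLocalMin hN i, ← h]
  ring

theorem sum_card_filter_isCycLocalMin_and_le (hN : 3 ≤ N) (i : ZMod N) :
    9 * ∑ j, #{S | isCycLocalMin S i ∧ isCycLocalMin S j} ≤
      (N + 10) * Fintype.card (ZMod N ≃ Fin N) := by
  have hi := card_filter_isCycLocalMin hN i
  have hfar : ∀ j ∈ univ.filter fun j => Disjoint i.cycNbhd j.cycNbhd,
      9 * #{S | isCycLocalMin S i ∧ isCycLocalMin S j} = Fintype.card (ZMod N ≃ Fin N) :=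
    fun j hj => card_filter_isCycLocalMin_and_of_disjoint hN (mem_filter.1 hj).2
  have hnear : ∀ j ∈ univ.filter fun j => ¬Disjoint i.cycNbhd j.cycNbhd,
      9 * #{S | isCycLocalMin S i ∧ isCycLocalMin S j} ≤ 3 * Fintype.card (ZMod N ≃ Fin N) := by
    intro j _
    have : #{S | isCycLocalMin S i ∧ isCycLocalMin S j} ≤ #{S | isCycLocalMin S i} :=
      card_le_card (monotone_filter_right _ fun _ _ => And.left)
    omega
  have hcard := card_filter_add_card_filter_not (s := univ)
    fun j : ZMod N => Disjoint i.cycNbhd j.cycNbhd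
  rw [card_univ, ZMod.card] at hcard
  have hsmall := ZMod.card_filter_not_disjoint_cycNbhd_le i
  rw [mul_sum, ← sum_filter_add_sum_filter_not univ fun j => Disjoint i.cycNbhd j.cycNbhd,
    sum_congr rfl hfar, sum_const, smul_eq_mul]
  grw [sum_le_card_nsmul _ _ _ hnear, smul_eq_mul]
  nlinarith

theorem sum_localMinCount (hN : 3 ≤ N) :
    3 * ∑ S, localMinCount N S = N * Fintype.card (ZMod N ≃ Fin N) := by
  simp only [localMinCount]
  rw [sum_card_filter_comm, mul_sum, sum_congr rfl fun i _ => card_filter_isCycLocalMin hN i,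
    sum_const, card_univ, ZMod.card, smul_eq_mul]

theorem sum_localMinCount_sq_le (hN : 3 ≤ N) :
    9 * ∑ S, localMinCount N S ^ 2 ≤ N * (N + 10) * Fintype.card (ZMod N ≃ Fin N) := by
  simp only [localMinCount]
  rw [sum_card_filter_sq, mul_sum]
  calc ∑ i, 9 * ∑ j, #{S | isCycLocalMin S i ∧ isCycLocalMin S j}
      ≤ ∑ _i : ZMod N, (N + 10) * Fintype.card (ZMod N ≃ Fin N) :=
        sum_le_sum fun i _ => sum_card_filter_isCycLocalMin_and_le hN i
    _ = N * (N + 10) * Fintype.card (ZMod N ≃ Fin N) := by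
        rw [sum_const, card_univ, ZMod.card, smul_eq_mul, mul_assoc]

theorem sum_sq_sub_localMinCount_le (hN : 3 ≤ N) :
    ∑ S, ((N : ℝ) / 3 - localMinCount N S) ^ 2 ≤
      10 * (N : ℝ) / 9 * Fintype.card (ZMod N ≃ Fin N) := by
  have h1 : 3 * ∑ S, (localMinCount N S : ℝ) = N * Fintype.card (ZMod N ≃ Fin N) := by
    exact_mod_cast sum_localMinCount hN
  have h2 : 9 * ∑ S, (localMinCount N S : ℝ) ^ 2 ≤
      (N : ℝ) * (N + 10) * Fintype.card (ZMod N ≃ Fin N) := by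
    exact_mod_cast sum_localMinCount_sq_le hN
  simp only [sub_sq, sum_add_distrib, sum_sub_distrib, ← mul_sum, sum_const, card_univ,
    nsmul_eq_mul]
  nlinarith

end LocalMin

/-- For a uniformly random cyclic permutation of `{1,...,N}` with `N ≥ 4`, the number `M`
of cyclic local minima satisfies `Pr[M ≤ (N-3)/18] ≤ 24/(N-3)`. -/
theorem localMin_count_lower_tail (N : ℕ) [NeZero N] (hN : 4 ≤ N) :
    ((Finset.univ.filter fun S : ZMod N ≃ Fin N =>
        (localMinCount N S : ℝ) ≤ ((N : ℝ) - 3) / 18).card : ℝ) /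
      (Fintype.card (ZMod N ≃ Fin N)) ≤ 24 / ((N : ℝ) - 3) := by
  have hT : (0 : ℝ) < Fintype.card (ZMod N ≃ Fin N) := by
    exact_mod_cast Fintype.card_pos_iff.2 ⟨Fintype.equivFinOfCardEq (ZMod.card N)⟩
  have hN' : (4 : ℝ) ≤ N := by exact_mod_cast hN
  have hchebyshev := (card_filter_le_mul_sq_le univ (fun S => (localMinCount N S : ℝ))
    (m := N / 3) (c := (N - 3) / 18) (by linarith)).trans (sum_sq_sub_localMinCount_le (by omega))
  rw [div_le_div_iff₀ hT (by linarith)]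
  nlinarith
end

section
/- For a uniformly random cyclic permutation of {1,...,N} with N divisible by 3, the indicator variables X_3, X_6, ..., X_N of being a cyclic local minimum (at positions that are multiples of 3) are mutually independent. -/
open scoped Classical

namespace CycAux
variable {N : ℕ} [NeZero N]
def emb (N : ℕ) [NeZero N] (t : ZMod 3) : ZMod N :=
  if t = 0 then 0 else if t = 1 then 1 else -1
lemma zmod3_cases (t : ZMod 3) : t = 0 ∨ t = 1 ∨ t = 2 := by revert t; decide
def f (h3 : 3 ∣ N) : ZMod N →+* ZMod 3 := ZMod.castHom h3 (ZMod 3)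
lemma emb_zero : emb N 0 = 0 := by simp [emb]
lemma emb_one : emb N 1 = 1 := by simp [emb]
lemma emb_two : emb N 2 = -1 := by
  rw [emb, if_neg (by decide), if_neg (by decide)]
lemma f_emb (h3 : 3 ∣ N) (t : ZMod 3) : f h3 (emb N t) = t := by
  rcases zmod3_cases t with h|h|h <;> subst h
  · rw [emb_zero, map_zero]
  · rw [emb_one, map_one]
  · rw [emb_two, map_neg, map_one]; decide
lemma emb_inj (h3 : 3 ∣ N) {s t : ZMod 3} (h : emb N s = emb N t) : s = t := by
  have := congrArg (f h3) h
  rwa [f_emb, f_emb] at this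
def base (h3 : 3 ∣ N) (x : ZMod N) : ZMod N := x - emb N (f h3 x)
lemma f_base (h3 : 3 ∣ N) (x : ZMod N) : f h3 (base h3 x) = 0 := by
  simp [base, map_sub, f_emb]
lemma base_add_emb_f (h3 : 3 ∣ N) (x : ZMod N) : base h3 x + emb N (f h3 x) = x := by
  simp [base]
lemma f_add_emb (h3 : 3 ∣ N) {i : ZMod N} (hi : f h3 i = 0) (t : ZMod 3) :
    f h3 (i + emb N t) = t := by
  simp [map_add, hi, f_emb]
lemma base_add_emb (h3 : 3 ∣ N) {i : ZMod N} (hi : f h3 i = 0) (t : ZMod 3) :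
    base h3 (i + emb N t) = i := by
  rw [base, f_add_emb h3 hi, add_sub_cancel_right]
lemma base_self (h3 : 3 ∣ N) {i : ZMod N} (hi : f h3 i = 0) : base h3 i = i := by
  rw [base, hi, emb_zero, sub_zero]
lemma f_of_dvd (h3 : 3 ∣ N) {i : ZMod N} (h : 3 ∣ i.val) : f h3 i = 0 := by
  have h1 : f h3 i = ((i.val : ℕ) : ZMod 3) := by
    rw [f, ZMod.castHom_apply, ZMod.natCast_val]
  rw [h1, (ZMod.natCast_eq_zero_iff i.val 3)]
  exact h

def sig (h3 : 3 ∣ N) (T : Finset (ZMod N)) (c : ZMod N → ZMod 3) : Equiv.Perm (ZMod N) where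
  toFun x := if base h3 x ∈ T then base h3 x + emb N (f h3 x + c (base h3 x)) else x
  invFun x := if base h3 x ∈ T then base h3 x + emb N (f h3 x - c (base h3 x)) else x
  left_inv x := by
    by_cases hx : base h3 x ∈ T
    · simp only [hx, if_pos]
      rw [base_add_emb h3 (f_base h3 x), f_add_emb h3 (f_base h3 x)]
      simp only [hx, if_pos]
      rw [add_sub_cancel_right, base_add_emb_f]
    · simp only [hx, if_neg, if_false]
  right_inv x := by
    by_cases hx : base h3 x ∈ T
    · simp only [hx, if_pos]
      rw [base_add_emb h3 (f_base h3 x), f_add_emb h3 (f_base h3 x)]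
      simp only [hx, if_pos]
      rw [sub_add_cancel, base_add_emb_f]
    · simp only [hx, if_neg, if_false]

lemma sig_apply_mem (h3 : 3 ∣ N) (T : Finset (ZMod N)) (c : ZMod N → ZMod 3)
    {i : ZMod N} (hi : f h3 i = 0) (hiT : i ∈ T) (t : ZMod 3) :
    sig h3 T c (i + emb N t) = i + emb N (t + c i) := by
  show (if _ then _ else _) = _
  rw [base_add_emb h3 hi, f_add_emb h3 hi, if_pos hiT]

lemma sig_apply_notMem (h3 : 3 ∣ N) (T : Finset (ZMod N)) (c : ZMod N → ZMod 3)
    {x : ZMod N} (hx : base h3 x ∉ T) : sig h3 T c x = x := by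
  show (if _ then _ else _) = _
  rw [if_neg hx]

lemma sig_sig (h3 : 3 ∣ N) (T : Finset (ZMod N)) (c c' : ZMod N → ZMod 3)
    (h : ∀ x, c x + c' x = 0) (x : ZMod N) :
    sig h3 T c (sig h3 T c' x) = x := by
  by_cases hx : base h3 x ∈ T
  · have hb : f h3 (base h3 x) = 0 := f_base h3 x
    have h1 : sig h3 T c' x = base h3 x + emb N (f h3 x + c' (base h3 x)) := by
      show (if _ then _ else _) = _
      rw [if_pos hx]
    rw [h1, sig_apply_mem h3 T c hb hx]
    have h2 : f h3 x + c' (base h3 x) + c (base h3 x) = f h3 x := by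
      have := h (base h3 x)
      rw [add_assoc, add_comm (c' _) (c _), this, add_zero]
    rw [h2, base_add_emb_f]
  · rw [sig_apply_notMem h3 T c' hx, sig_apply_notMem h3 T c hx]

def cmin (S : ZMod N ≃ Fin N) (i : ZMod N) : ZMod 3 :=
  if S (i+1) < S (i-1) ∧ S (i+1) < S i then 1
  else if S (i-1) < S (i+1) ∧ S (i-1) < S i then 2
  else 0

lemma add_emb (i : ZMod N) : i + emb N 0 = i ∧ i + emb N 1 = i + 1 ∧ i + emb N 2 = i - 1 := by
  refine ⟨by rw [emb_zero, add_zero], by rw [emb_one], by rw [emb_two, ← sub_eq_add_neg]⟩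

lemma cmin_eq (S : ZMod N ≃ Fin N) (i : ZMod N) (c : ZMod 3)
    (h1 : S (i + emb N c) < S (i + emb N (1 + c)))
    (h2 : S (i + emb N c) < S (i + emb N (2 + c))) :
    cmin S i = c := by
  obtain ⟨e0, e1, e2⟩ := add_emb (N := N) i
  rcases zmod3_cases c with h|h|h <;> subst h
  · rw [show (1+0 : ZMod 3) = 1 by decide] at h1
    rw [show (2+0 : ZMod 3) = 2 by decide] at h2
    rw [e0, e1] at h1; rw [e0, e2] at h2
    rw [cmin, if_neg (by rintro ⟨-, hb⟩; exact absurd h1 (asymm hb)),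
      if_neg (by rintro ⟨-, hb⟩; exact absurd h2 (asymm hb))]
  · rw [show (1+1 : ZMod 3) = 2 by decide] at h1
    rw [show (2+1 : ZMod 3) = 0 by decide] at h2
    rw [e1, e2] at h1; rw [e1, e0] at h2
    rw [cmin, if_pos ⟨h1, h2⟩]
  · rw [show (1+2 : ZMod 3) = 0 by decide] at h1
    rw [show (2+2 : ZMod 3) = 1 by decide] at h2
    rw [e2, e0] at h1; rw [e2, e1] at h2
    rw [cmin, if_neg (by rintro ⟨ha, -⟩; exact absurd h2 (asymm ha)), if_pos ⟨h2, h1⟩]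

lemma cmin_min (h3 : 3 ∣ N) (S : ZMod N ≃ Fin N) (i : ZMod N) :
    S (i + emb N (cmin S i)) < S (i + emb N (1 + cmin S i)) ∧
      S (i + emb N (cmin S i)) < S (i + emb N (2 + cmin S i)) := by
  have key : ∃ c : ZMod 3, S (i + emb N c) < S (i + emb N (1 + c)) ∧
      S (i + emb N c) < S (i + emb N (2 + c)) := by
    have hne : ∀ s t : ZMod 3, s ≠ t → S (i + emb N s) ≠ S (i + emb N t) := by
      intro s t hst hS
      exact hst (emb_inj h3 (by simpa using S.injective hS))
    rcases (hne 1 2 (by decide)).lt_or_gt with hab | hab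
    · rcases (hne 1 0 (by decide)).lt_or_gt with hac | hac
      · exact ⟨1, by rw [show (1+1 : ZMod 3) = 2 by decide]; exact hab,
          by rw [show (2+1 : ZMod 3) = 0 by decide]; exact hac⟩
      · exact ⟨0, by rw [show (1+0 : ZMod 3) = 1 by decide]; exact hac,
          by rw [show (2+0 : ZMod 3) = 2 by decide]; exact hac.trans hab⟩
    · rcases (hne 2 0 (by decide)).lt_or_gt with hbc | hbc
      · exact ⟨2, by rw [show (1+2 : ZMod 3) = 0 by decide]; exact hbc,
          by rw [show (2+2 : ZMod 3) = 1 by decide]; exact hab⟩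
      · exact ⟨0, by rw [show (1+0 : ZMod 3) = 1 by decide]; exact hbc.trans hab,
          by rw [show (2+0 : ZMod 3) = 2 by decide]; exact hbc⟩
  obtain ⟨c, hc1, hc2⟩ := key
  rw [cmin_eq S i c hc1 hc2]
  exact ⟨hc1, hc2⟩

/-- Extend a function on `T` to all of `ZMod N` by zero. -/
def ext (T : Finset (ZMod N)) (c : ↥T → ZMod 3) : ZMod N → ZMod 3 :=
  fun x => if h : x ∈ T then c ⟨x, h⟩ else 0

lemma allmin (h3 : 3 ∣ N) (T : Finset (ZMod N)) (hT : ∀ i ∈ T, f h3 i = 0)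
    (S : ZMod N ≃ Fin N) :
    ∀ i ∈ T, isCycLocalMin ((sig h3 T (ext T fun j => cmin S j.1)).trans S) i := by
  intro i hi
  have hfi : f h3 i = 0 := hT i hi
  obtain ⟨e0, e1, e2⟩ := add_emb (N := N) i
  have hext : ext T (fun j : ↥T => cmin S j.1) i = cmin S i := by
    rw [ext, dif_pos hi]
  have key : ∀ t : ZMod 3, (sig h3 T (ext T fun j => cmin S j.1)).trans S (i + emb N t)
      = S (i + emb N (t + cmin S i)) := by
    intro t
    rw [Equiv.trans_apply, sig_apply_mem h3 T _ hfi hi, hext]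
  constructor
  · have := key 0
    rw [e0] at this
    have h2 := key 2
    rw [e2] at h2
    rw [this, h2, zero_add]
    exact (cmin_min h3 S i).2
  · have := key 0
    rw [e0] at this
    have h1 := key 1
    rw [e1] at h1
    rw [this, h1, zero_add]
    exact (cmin_min h3 S i).1

def myEquiv (h3 : 3 ∣ N) (T : Finset (ZMod N)) (hT : ∀ i ∈ T, f h3 i = 0) :
    (ZMod N ≃ Fin N) ≃
      {S : ZMod N ≃ Fin N // ∀ i ∈ T, isCycLocalMin S i} × (↥T → ZMod 3) where
  toFun S := (⟨(sig h3 T (ext T fun j => cmin S j.1)).trans S, allmin h3 T hT S⟩,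
    fun j => cmin S j.1)
  invFun p := (sig h3 T (ext T fun j => -(p.2 j))).trans p.1.1
  left_inv S := by
    refine Equiv.ext fun x => ?_
    simp only [Equiv.trans_apply]
    exact congrArg (fun z => S z) (sig_sig h3 T _ _ (fun y => by
      simp only [ext]
      by_cases hy : y ∈ T
      · rw [dif_pos hy, dif_pos hy, add_neg_cancel]
      · rw [dif_neg hy, dif_neg hy, add_zero]) x)
  right_inv := by
    rintro ⟨⟨S₀, hS₀⟩, c⟩
    set S : ZMod N ≃ Fin N := (sig h3 T (ext T fun j => -(c j))).trans S₀ with hS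
    have hc : ∀ j : ↥T, cmin S j.1 = c j := by
      rintro ⟨i, hi⟩
      have hfi : f h3 i = 0 := hT i hi
      obtain ⟨e0, e1, e2⟩ := add_emb (N := N) i
      have hext : ext T (fun j : ↥T => -(c j)) i = -(c ⟨i, hi⟩) := by
        rw [ext, dif_pos hi]
      have key : ∀ t : ZMod 3, S (i + emb N t) = S₀ (i + emb N (t - c ⟨i, hi⟩)) := by
        intro t
        rw [hS, Equiv.trans_apply, sig_apply_mem h3 T _ hfi hi, hext, ← sub_eq_add_neg]
      apply cmin_eq S i (c ⟨i, hi⟩)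
      · rw [key, key, sub_self, add_sub_cancel_right, e0, e1]
        exact (hS₀ i hi).2
      · rw [key, key, sub_self, add_sub_cancel_right, e0, e2]
        exact (hS₀ i hi).1
    refine Prod.ext ?_ (funext hc)
    apply Subtype.ext
    refine Equiv.ext fun x => ?_
    simp only [Equiv.trans_apply]
    refine congrArg (fun z => S₀ z) (sig_sig h3 T _ _ (fun y => ?_) x)
    simp only [ext]
    by_cases hy : y ∈ T
    · rw [dif_pos hy, dif_pos hy, hc ⟨y, hy⟩, neg_add_cancel]
    · rw [dif_neg hy, dif_neg hy, add_zero]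

lemma count (h3 : 3 ∣ N) (T : Finset (ZMod N)) (hT : ∀ i ∈ T, 3 ∣ (i : ZMod N).val) :
    Fintype.card (ZMod N ≃ Fin N) =
      (Finset.univ.filter fun S : ZMod N ≃ Fin N => ∀ i ∈ T, isCycLocalMin S i).card
        * 3 ^ T.card := by
  have hT' : ∀ i ∈ T, f h3 i = 0 := fun i hi => f_of_dvd h3 (hT i hi)
  rw [Fintype.card_congr (myEquiv h3 T hT'), Fintype.card_prod, Fintype.card_fun,
    Fintype.card_coe]
  congr 1
  rw [Fintype.card_subtype]

end CycAux

/-- For a uniformly random cyclic permutation of `{1,...,N}` with `3 ∣ N`, the events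
"position `i` is a cyclic local minimum", for positions `i` that are multiples of `3`
(i.e. positions `3, 6, ..., N`), are mutually independent: for every subset `T` of these
positions, the probability that all of them are local minima equals the product of the
individual probabilities. -/
theorem localMin_multiple_of_three_indep (N : ℕ) [NeZero N] (hN : 3 ≤ N) (h3 : 3 ∣ N)
    (T : Finset (ZMod N)) (hT : ∀ i ∈ T, 3 ∣ i.val) :
    ((Finset.univ.filter fun S : ZMod N ≃ Fin N =>
        ∀ i ∈ T, isCycLocalMin S i).card : ℝ) / (Fintype.card (ZMod N ≃ Fin N)) =
      ∏ i ∈ T,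
        ((Finset.univ.filter fun S : ZMod N ≃ Fin N => isCycLocalMin S i).card : ℝ) /
          (Fintype.card (ZMod N ≃ Fin N)) := by
  have hne : Nonempty (ZMod N ≃ Fin N) := ⟨Fintype.equivFinOfCardEq (ZMod.card N)⟩
  have hU : (0 : ℝ) < (Fintype.card (ZMod N ≃ Fin N) : ℝ) := by
    exact_mod_cast Fintype.card_pos
  -- whole-T count
  have key := CycAux.count h3 T hT
  -- singleton counts
  have single : ∀ i ∈ T,
      ((Finset.univ.filter fun S : ZMod N ≃ Fin N => isCycLocalMin S i).card : ℝ) /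
          (Fintype.card (ZMod N ≃ Fin N)) = 1 / 3 := by
    intro i hi
    have hs := CycAux.count h3 {i} (by simpa using hT i hi)
    have hfilter : (Finset.univ.filter fun S : ZMod N ≃ Fin N =>
        ∀ j ∈ ({i} : Finset (ZMod N)), isCycLocalMin S j) =
        Finset.univ.filter fun S : ZMod N ≃ Fin N => isCycLocalMin S i := by
      apply Finset.filter_congr
      intro S _
      simp
    rw [hfilter, Finset.card_singleton, pow_one] at hs
    have hc : ((Finset.univ.filter fun S : ZMod N ≃ Fin N => isCycLocalMin S i).card : ℝ) * 3
        = (Fintype.card (ZMod N ≃ Fin N) : ℝ) := by exact_mod_cast hs.symm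
    rw [← hc]
    have h30 : (3 : ℝ) ≠ 0 := by norm_num
    have hcne : ((Finset.univ.filter fun S : ZMod N ≃ Fin N => isCycLocalMin S i).card : ℝ) ≠ 0 := by
      intro h0
      rw [h0, zero_mul] at hc
      exact absurd hc.symm (ne_of_gt hU)
    field_simp
  rw [Finset.prod_congr rfl single, Finset.prod_const]
  have hkey : ((Finset.univ.filter fun S : ZMod N ≃ Fin N =>
      ∀ i ∈ T, isCycLocalMin S i).card : ℝ) * 3 ^ T.card
      = (Fintype.card (ZMod N ≃ Fin N) : ℝ) := by exact_mod_cast key.symm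
  have hcne : ((Finset.univ.filter fun S : ZMod N ≃ Fin N =>
      ∀ i ∈ T, isCycLocalMin S i).card : ℝ) ≠ 0 := by
    intro h0
    rw [h0, zero_mul] at hkey
    exact absurd hkey.symm (ne_of_gt hU)
  rw [← hkey]
  rw [div_pow, one_pow]
  rw [mul_comm]
  rw [div_eq_div_iff (by positivity) (by positivity)]
  ring
end

section
/- Let N, M, i be positive integers with i ≤ M. Then the ratio (2M)(2M-2)(2M-4)···(2M-2i+2) / ((2M)(2M-1)(2M-2)···(2M-i+1)) is at most e^(-i²/(16M)). -/
/-- For positive integers `M, i` with `4 ≤ i ≤ M`, the ratio of the even falling product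
`(2M)(2M-2)···(2M-2i+2)` (with `i` factors) to the falling factorial
`(2M)(2M-1)···(2M-i+1)` (with `i` factors) is at most `e^(-i²/(16M))`. -/
theorem even_falling_div_falling_le_exp (M i : ℕ) (hi : 4 ≤ i) (hiM : i ≤ M) :
    (∏ j ∈ Finset.range i, ((2 * M : ℝ) - 2 * j)) /
      (∏ j ∈ Finset.range i, ((2 * M : ℝ) - j)) ≤
      Real.exp (-(i : ℝ) ^ 2 / (16 * M)) := by
  have hiR : (4:ℝ) ≤ i := by exact_mod_cast hi
  have hMR : (i:ℝ) ≤ M := by exact_mod_cast hiM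
  have hM : (0:ℝ) < M := by linarith
  rw [← Finset.prod_div_distrib]
  have key : ∀ j ∈ Finset.range i,
      ((2 * M : ℝ) - 2 * j) / ((2 * M : ℝ) - j) ≤ Real.exp (-(j : ℝ) / (2 * M)) := by
    intro j hj
    have hjlt : (j : ℝ) < M := by
      have : j < i := Finset.mem_range.mp hj
      have : (j : ℝ) < i := by exact_mod_cast this
      linarith
    have hj0 : (0:ℝ) ≤ j := Nat.cast_nonneg j
    have h1 : (0:ℝ) < (2 * M : ℝ) - j := by linarith
    have h2 : ((2 * M : ℝ) - 2 * j) / ((2 * M : ℝ) - j) ≤ 1 - (j : ℝ) / (2 * M) := by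
      rw [div_le_iff₀ h1]
      have h3 : (1 - (j : ℝ) / (2 * M)) * ((2 * M : ℝ) - j)
          = ((2*M - j)^2) / (2*M) := by field_simp
      rw [h3, le_div_iff₀ (by linarith : (0:ℝ) < 2*M)]
      nlinarith [sq_nonneg ((j:ℝ))]
    have h4 := Real.add_one_le_exp (-(j : ℝ) / (2 * M))
    rw [neg_div] at h4 ⊢
    linarith
  have hnn : ∀ j ∈ Finset.range i, (0:ℝ) ≤ ((2 * M : ℝ) - 2 * j) / ((2 * M : ℝ) - j) := by
    intro j hj
    have : j < i := Finset.mem_range.mp hj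
    have hjlt : (j : ℝ) < i := by exact_mod_cast this
    apply div_nonneg <;> nlinarith
  calc (∏ j ∈ Finset.range i, (((2 * M : ℝ) - 2 * j) / ((2 * M : ℝ) - j)))
      ≤ ∏ j ∈ Finset.range i, Real.exp (-(j : ℝ) / (2 * M)) :=
        Finset.prod_le_prod hnn key
    _ = Real.exp (∑ j ∈ Finset.range i, (-(j : ℝ) / (2 * M))) := (Real.exp_sum _ _).symm
    _ ≤ Real.exp (-(i : ℝ) ^ 2 / (16 * M)) := by
        apply Real.exp_le_exp.mpr
        have hsum : (∑ j ∈ Finset.range i, (j : ℝ)) = i * (i - 1) / 2 := by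
          have := Finset.sum_range_id_mul_two i
          have h : ((∑ j ∈ Finset.range i, j : ℕ) : ℝ) * 2 = (i : ℝ) * ((i : ℝ) - 1) := by
            have h2 : ((∑ j ∈ Finset.range i, j) * 2 : ℕ) = i * (i - 1) := this
            have h3 : ((i * (i-1) : ℕ) : ℝ) = (i:ℝ) * ((i:ℝ) - 1) := by
              rw [Nat.cast_mul, Nat.cast_sub (by omega : 1 ≤ i)]; norm_num
            calc ((∑ j ∈ Finset.range i, j : ℕ) : ℝ) * 2
                = (((∑ j ∈ Finset.range i, j) * 2 : ℕ) : ℝ) := by push_cast; ring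
              _ = (i:ℝ) * ((i:ℝ) - 1) := by rw [h2, h3]
          push_cast at h ⊢
          linarith
        have : (∑ j ∈ Finset.range i, (-(j : ℝ) / (2 * M)))
            = -(∑ j ∈ Finset.range i, (j : ℝ)) / (2 * M) := by
          rw [← Finset.sum_div, ← Finset.sum_neg_distrib]
        rw [this, hsum]
        rw [div_le_div_iff₀ (by linarith) (by linarith)]
        nlinarith [mul_nonneg hM.le (mul_nonneg (by linarith : (0:ℝ) ≤ (i:ℝ))
          (by linarith : (0:ℝ) ≤ 3*(i:ℝ) - 4))]
end

section
/- In the Union-Find random process with a linking strategy guaranteeing uncompressed forest depth at most C·log₂|V| for all times, the final potential satisfies Φ_{|E|-1} ≤ 4C·|E|·log₂|V|·(log₂|E| + 1), i.e. Φ_{|E|-1} = O(|E|·log|V|·log|E|). -/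
/-- Bound on the final Union-Find potential. `Ecard = |E|` edges are inserted; the `i`-th
term of the potential (for `i = 0,...,|E|-1`) is the frozen rank `φ i` of an edge times the
multiplier `|E|/(|E|-i)`. With a linking strategy guaranteeing uncompressed forest depth at
most `C·log₂|V|` at all times, every edge rank satisfies `0 ≤ φ i ≤ 2C·log₂|V|`, and the
final potential satisfies `Φ_{|E|-1} ≤ 4C·|E|·log₂|V|·(log₂|E| + 1)`, i.e.
`Φ_{|E|-1} = O(|E|·log|V|·log|E|)`. -/
theorem final_potential_bound (Ecard V : ℕ) (hE : 1 ≤ Ecard) (hV : 2 ≤ V)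
    (C : ℝ) (hC : 0 < C) (φ : ℕ → ℝ)
    (hφ0 : ∀ i, 0 ≤ φ i) (hφ : ∀ i, φ i ≤ 2 * C * Real.logb 2 V) :
    ∑ i ∈ Finset.range Ecard, ((Ecard : ℝ) / ((Ecard : ℝ) - i)) * φ i ≤
      4 * C * Ecard * Real.logb 2 V * (Real.logb 2 Ecard + 1) := by
  have hlogV : (1:ℝ) ≤ Real.logb 2 V := by
    rw [show (1:ℝ) = Real.logb 2 2 by simp]
    exact Real.logb_le_logb_of_le one_lt_two two_pos (by exact_mod_cast hV)
  have hB : (0:ℝ) ≤ 2 * C * Real.logb 2 V := by positivity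
  have key : ∀ i ∈ Finset.range Ecard,
      ((Ecard : ℝ) / ((Ecard : ℝ) - i)) * φ i ≤
      ((Ecard : ℝ) / ((Ecard : ℝ) - i)) * (2 * C * Real.logb 2 V) := by
    intro i hi
    have hi' : (i:ℝ) < Ecard := by exact_mod_cast Finset.mem_range.mp hi
    have hpos : (0:ℝ) ≤ (Ecard : ℝ) / ((Ecard : ℝ) - i) := by
      apply div_nonneg (by positivity); linarith
    exact mul_le_mul_of_nonneg_left (hφ i) hpos
  calc ∑ i ∈ Finset.range Ecard, ((Ecard : ℝ) / ((Ecard : ℝ) - i)) * φ i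
      ≤ ∑ i ∈ Finset.range Ecard, ((Ecard : ℝ) / ((Ecard : ℝ) - i)) * (2 * C * Real.logb 2 V) :=
        Finset.sum_le_sum key
    _ = (∑ i ∈ Finset.range Ecard, (Ecard : ℝ) / ((Ecard : ℝ) - i)) * (2 * C * Real.logb 2 V) := by
        rw [Finset.sum_mul]
    _ = ((Ecard : ℝ) * (harmonic Ecard : ℝ)) * (2 * C * Real.logb 2 V) := by
        congr 1
        rw [← Finset.sum_range_reflect]
        have : ∀ i ∈ Finset.range Ecard,
            (Ecard : ℝ) / ((Ecard : ℝ) - (Ecard - 1 - i : ℕ)) = (Ecard : ℝ) * ((i:ℝ)+1)⁻¹ := by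
          intro i hi
          have hi' : i < Ecard := Finset.mem_range.mp hi
          have : ((Ecard - 1 - i : ℕ) : ℝ) = (Ecard : ℝ) - 1 - i := by
            have := Nat.lt_of_lt_of_le hi' (le_refl Ecard)
            push_cast [Nat.sub_sub, Nat.cast_sub (by omega : 1 + i ≤ Ecard)]
            ring
          rw [this, div_eq_mul_inv]
          ring_nf
        rw [Finset.sum_congr rfl this, ← Finset.mul_sum]
        congr 1
        rw [harmonic]
        push_cast
        rfl
    _ ≤ ((Ecard : ℝ) * (1 + Real.log Ecard)) * (2 * C * Real.logb 2 V) := by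
        apply mul_le_mul_of_nonneg_right _ hB
        apply mul_le_mul_of_nonneg_left (harmonic_le_one_add_log Ecard) (by positivity)
    _ ≤ ((Ecard : ℝ) * (1 + Real.logb 2 Ecard)) * (2 * C * Real.logb 2 V) := by
        apply mul_le_mul_of_nonneg_right _ hB
        apply mul_le_mul_of_nonneg_left _ (by positivity)
        have hlE : 0 ≤ Real.log Ecard := Real.log_nonneg (by exact_mod_cast hE)
        have : Real.log Ecard ≤ Real.logb 2 Ecard := by
          rw [Real.logb, le_div_iff₀ (Real.log_pos one_lt_two)]
          nlinarith [Real.log_two_lt_d9, hlE]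
        linarith
    _ ≤ 4 * C * Ecard * Real.logb 2 V * (Real.logb 2 Ecard + 1) := by
        have hlE : 0 ≤ Real.logb 2 Ecard := Real.logb_nonneg one_lt_two (by exact_mod_cast hE)
        have hEc : (1:ℝ) ≤ Ecard := by exact_mod_cast hE
        nlinarith [mul_nonneg (mul_nonneg hC.le (zero_le_one.trans hEc)) hlE]
end

section
/- Define T(t,m) for 0 ≤ t ≤ W and 0 ≤ m ≤ M by the backward recurrence T(t,m) = (2m/(N-t))·T(t+1, m-1) + ((N-t-m-M)/(N-t))·T(t+1, m) with base case T(W, m) = 1 for all m. Then T(0, M) = Σ_{i=0}^{W} C(W, i) · V_{M-i}, where V_m = [(2M)(2M-2)···(2m+2)] · [(N-2M)(N-2M-1)···(N-M-m-W+1)] / [N(N-1)···(N-W+1)]. -/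
/-- `Trec N W M t m` is the probability `T(t,m)` of a future collision in the prefix
process: `T(t,m) = (2m/(N-t))·T(t+1,m-1) + ((N-t-m-M)/(N-t))·T(t+1,m)` with base case
`T(W,m) = 1`. -/
noncomputable def Trec (N W M : ℕ) : ℕ → ℕ → ℝ
  | t, m =>
    if _ : t < W then
      (2 * (m : ℝ) / ((N : ℝ) - t)) * Trec N W M (t + 1) (m - 1) +
        (((N : ℝ) - t - m - M) / ((N : ℝ) - t)) * Trec N W M (t + 1) m
    else 1
  termination_by t _ => W - t
  decreasing_by all_goals omega

/-- `Vval N W M m` is the common value `V_m` of all expansion terms with `M - m`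
step-down transitions:
`V_m = [(2M)(2M-2)···(2m+2)] · [(N-2M)(N-2M-1)···(N-M-m-W+1)] / [N(N-1)···(N-W+1)]`. -/
noncomputable def Vval (N W M m : ℕ) : ℝ :=
  ((∏ j ∈ Finset.range (M - m), ((2 * M : ℝ) - 2 * j)) *
      ∏ j ∈ Finset.range (W - (M - m)), ((N : ℝ) - 2 * M - j)) /
    ∏ j ∈ Finset.range W, ((N : ℝ) - j)

/-! Clearing the denominator `(N-t)(N-t-1)⋯(N-W+1)`, the numerator `S` of `T(t,m)` satisfies
`S_{k+1}(m, x) = 2m · S_k(m-1, x) + x · S_k(m, x-1)` with `x = N - M - t - m`: the "stay"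
coefficient depends only on `t + m`, which a step-down transition leaves unchanged. This is
Pascal's rule for `∑ C(k,i) 2^i (m)_i (x)_{k-i}` with falling factorials `(y)_n`, and at
`t = 0`, `m = M` its `i`-th term is `C(W,i) · V_{M-i}`. -/

open Finset Polynomial

section ChoosePochhammer

variable {R : Type*} [CommRing R]

theorem descPochhammer_eval_succ_left (n : ℕ) (a : R) :
    (descPochhammer R (n + 1)).eval a = a * (descPochhammer R n).eval (a - 1) := by
  simp [descPochhammer_succ_left]

noncomputable def choosePochhammerSum (c a x : R) (k : ℕ) : R :=
  ∑ ij ∈ antidiagonal k,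
    (k.choose ij.1 : R) *
      (c ^ ij.1 * (descPochhammer R ij.1).eval a * (descPochhammer R ij.2).eval x)

@[simp]
theorem choosePochhammerSum_zero (c a x : R) : choosePochhammerSum c a x 0 = 1 := by
  simp [choosePochhammerSum]

theorem choosePochhammerSum_succ (c a x : R) (k : ℕ) :
    choosePochhammerSum c a x (k + 1) =
      c * a * choosePochhammerSum c (a - 1) x k + x * choosePochhammerSum c a (x - 1) k := by
  rw [choosePochhammerSum, sum_antidiagonal_choose_succ_mul
      (fun i j => c ^ i * (descPochhammer R i).eval a * (descPochhammer R j).eval x),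
    add_comm, choosePochhammerSum, choosePochhammerSum, mul_sum, mul_sum]
  congr 1 <;> refine sum_congr rfl fun ij hij => ?_
  · rw [Nat.choose_symm_of_eq_add (mem_antidiagonal.mp hij).symm, descPochhammer_eval_succ_left]
    ring
  · rw [descPochhammer_eval_succ_left]
    ring

end ChoosePochhammer

section Trec

variable {N W M : ℕ}

theorem Trec_of_lt {t : ℕ} (m : ℕ) (h : t < W) :
    Trec N W M t m =
      (2 * (m : ℝ) / ((N : ℝ) - t)) * Trec N W M (t + 1) (m - 1) +
        (((N : ℝ) - t - m - M) / ((N : ℝ) - t)) * Trec N W M (t + 1) m := by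
  rw [Trec, dif_pos h]

@[simp]
theorem Trec_self (m : ℕ) : Trec N W M W m = 1 := by
  rw [Trec, dif_neg (lt_irrefl W)]

theorem Trec_eq_choosePochhammerSum_div {t : ℕ} (m : ℕ) (ht : t ≤ W) :
    Trec N W M t m =
      choosePochhammerSum 2 (m : ℝ) ((N : ℝ) - M - t - m) (W - t) /
        (descPochhammer ℝ (W - t)).eval ((N : ℝ) - t) := by
  induction hk : W - t generalizing t m with
  | zero => simp [show t = W by omega]
  | succ k ih =>
    have ih' := fun m => ih m (show t + 1 ≤ W by omega) (by omega)
    rw [Trec_of_lt m (by omega), ih', ih', choosePochhammerSum_succ, descPochhammer_eval_succ_left]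
    have hden : (N : ℝ) - t - 1 = N - ↑(t + 1) := by push_cast; ring
    rw [add_div, ← div_mul_div_comm, ← div_mul_div_comm, hden]
    congr 1
    · rcases m with _ | m
      · simp -- the `ℕ`-truncated `0 - 1` is harmless: its coefficient `2 * 0` vanishes
      · congr 3 <;> push_cast <;> ring
    · congr 2
      · ring
      · congr 1; push_cast; ring

end Trec

theorem Trec_zero_eq_sum_general (N W M : ℕ) (hWM : W ≤ M) :
    Trec N W M 0 M = ∑ i ∈ Finset.range (W + 1), (W.choose i : ℝ) * Vval N W M (M - i) := by
  rw [Trec_eq_choosePochhammerSum_div M (Nat.zero_le W), choosePochhammerSum, sum_div,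
    Nat.sum_antidiagonal_eq_sum_range_succ_mk]
  refine sum_congr rfl fun i hi => ?_
  have hiM : M - (M - i) = i := by have := mem_range.mp hi; omega
  simp only [Vval, hiM, descPochhammer_eval_eq_prod_range, Nat.sub_zero, CharP.cast_eq_zero,
    sub_zero, ← mul_sub, prod_mul_distrib, prod_const, card_range]
  rw [show (N : ℝ) - M - M = N - 2 * M by ring]
  ring

/-- Expanding the recurrence `T(t,m)`, all monomials with the same number `M - m` of
step-down transitions have the same value `V_m`, and there are `C(W, M-m)` of them; hence
`T(0,M) = ∑_{i=0}^{W} C(W,i) · V_{M-i}`. -/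
theorem Trec_zero_eq_sum (N W M : ℕ) (hN : 0 < N) (hW : 0 < W) (hM : 0 < M)
    (hWM : W ≤ M) (hNM : 2 * M + W ≤ N) :
    Trec N W M 0 M = ∑ i ∈ Finset.range (W + 1), (W.choose i : ℝ) * Vval N W M (M - i) :=
  Trec_zero_eq_sum_general N W M hWM
end
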